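/- Let Y be any graph in the family 𝒴_{k+1,ℓ+1}, i.e., obtained from a path P_{k+1} by attaching a path P_{ℓ+1} at an internal vertex. Then for every p ≥ 2 and m = |V(C_{k,ℓ}^{p+1})|, the edge blow-up C_{k,ℓ}^{p+1} is a subgraph of Y ∨ K_{p-1}(m, m, …, m). -/

import Mathlib

open SimpleGraph

/-- The lollipop `C_{k,ℓ}`: a cycle on vertices `0,…,k-1` together with a pendant
path `0, k, k+1, …, k+ℓ-1` appended to the cycle vertex `0` (the *center*). -/
def lollipop (k l : ℕ) : SimpleGraph (Fin (k + l)) :=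
  SimpleGraph.fromRel (fun a b =>
    (b.val = a.val + 1 ∧ b.val < k) ∨ (a.val = 0 ∧ b.val = k - 1) ∨
    (a.val = 0 ∧ b.val = k) ∨ (b.val = a.val + 1 ∧ k ≤ a.val))

/-- The edge blow-up `H^{p+1}` of a graph `H`: each edge of `H` is replaced by a
clique of order `p+1`, the `p-1` new vertices of the cliques being all distinct. -/
def edgeBlowup {V : Type*} (H : SimpleGraph V) (p : ℕ) :
    SimpleGraph (V ⊕ (H.edgeSet × Fin (p - 1))) where
  Adj x y := match x, y with
    | .inl a, .inl b => H.Adj a b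
    | .inl a, .inr e => a ∈ (e.1 : Sym2 V)
    | .inr e, .inl a => a ∈ (e.1 : Sym2 V)
    | .inr e, .inr f => e.1 = f.1 ∧ e.2 ≠ f.2
  symm := ⟨by rintro (a | e) (b | f) h <;> simp_all <;> tauto⟩
  loopless := ⟨by rintro (a | e) h <;> simp_all⟩

/-- `A` is contained in `B` as a subgraph (there is an injective graph homomorphism). -/
def IsCont {α β : Type*} (A : SimpleGraph α) (B : SimpleGraph β) : Prop :=
  ∃ f : α → β, Function.Injective f ∧ ∀ ⦃a b⦄, A.Adj a b → B.Adj (f a) (f b)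

/-- The join `G ∨ H` of two graphs: all edges between the two graphs are added. -/
def gJoin {α β : Type*} (G : SimpleGraph α) (H : SimpleGraph β) : SimpleGraph (α ⊕ β) where
  Adj x y := match x, y with
    | .inl a, .inl b => G.Adj a b
    | .inr a, .inr b => H.Adj a b
    | .inl _, .inr _ => True
    | .inr _, .inl _ => True
  symm := ⟨by rintro (a | a) (b | b) h <;> first | exact h.symm | trivial⟩
  loopless := ⟨by rintro (a | a) h <;> first | exact G.irrefl h | exact H.irrefl h⟩

/-- The disjoint union of two graphs. -/
def dUnion {α β : Type*} (G : SimpleGraph α) (H : SimpleGraph β) : SimpleGraph (α ⊕ β) where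
  Adj x y := match x, y with
    | .inl a, .inl b => G.Adj a b
    | .inr a, .inr b => H.Adj a b
    | _, _ => False
  symm := ⟨by rintro (a | a) (b | b) h <;> first | exact h.symm | exact h⟩
  loopless := ⟨by rintro (a | a) h <;> first | exact G.irrefl h | exact H.irrefl h⟩

/-- `a` vertex-disjoint copies of the graph `G`. -/
def copies {β : Type*} (a : ℕ) (G : SimpleGraph β) : SimpleGraph (Fin a × β) where
  Adj x y := x.1 = y.1 ∧ G.Adj x.2 y.2
  symm := ⟨by rintro x y ⟨h1, h2⟩; exact ⟨h1.symm, h2.symm⟩⟩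
  loopless := ⟨by rintro x ⟨h1, h2⟩; exact G.irrefl h2⟩

/-- The complete multipartite graph `K_{p}(m,…,m)` with `p` parts of size `m`. -/
def completeMultipartite (p m : ℕ) : SimpleGraph (Fin p × Fin m) where
  Adj x y := x.1 ≠ y.1
  symm := ⟨fun _ _ h => h.symm⟩

/-- `H(n,p,q) = K_{q-1} ∨ T_p(n-q+1)`. -/
def Hgraph (n p q : ℕ) : SimpleGraph (Fin (q - 1) ⊕ Fin (n - (q - 1))) :=
  gJoin (completeGraph (Fin (q - 1))) (turanGraph (n - (q - 1)) p)

/-- The number of edges of a graph. -/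
noncomputable def numEdges {α : Type*} (G : SimpleGraph α) : ℕ := Nat.card G.edgeSet

/-- `E` (a graph on `n` vertices) is the unique extremal `H`-free graph on `n`
vertices: it is `H`-free, every `H`-free graph on `n` vertices has at most as many
edges, and any `H`-free graph attaining this maximum is isomorphic to `E`. -/
def UniqueExtremal {W α : Type*} (H : SimpleGraph W) (n : ℕ) (E : SimpleGraph α) : Prop :=
  ¬ IsCont H E ∧ Nat.card α = n ∧
    ∀ G : SimpleGraph (Fin n), ¬ IsCont H G →
      numEdges G ≤ numEdges E ∧ (numEdges G = numEdges E → Nonempty (G ≃g E))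

/-- The member of the family `𝒴_{k+1,ℓ+1}` obtained from the path `P_{k+1}`
(on `Fin (k+1)`) by appending a path `P_{ℓ+1}` to its vertex `j` (the branching
vertex), the appended path having the `ℓ` extra vertices `Fin l`. -/
def Ygraph (k l j : ℕ) : SimpleGraph (Fin (k + 1) ⊕ Fin l) :=
  SimpleGraph.fromRel (fun x y => match x, y with
    | .inl a, .inl b => b.val = a.val + 1
    | .inl a, .inr b => a.val = j ∧ b.val = 0
    | .inr a, .inr b => b.val = a.val + 1
    | _, _ => False)

/-- The graph obtained from `H` by splitting every vertex of `U`: each `v ∈ U`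
is replaced by `deg v` new vertices, one for each neighbor `w` of `v`, joined to
`w` only. -/
def splitGraph {V : Type*} (H : SimpleGraph V) (U : Set V) :
    SimpleGraph ({v : V // v ∉ U} ⊕ {p : V × V // p.1 ∈ U ∧ H.Adj p.1 p.2}) where
  Adj x y := match x, y with
    | .inl a, .inl b => H.Adj a.1 b.1
    | .inl a, .inr e => e.1.2 = a.1
    | .inr e, .inl a => e.1.2 = a.1
    | .inr _, .inr _ => False
  symm := ⟨by rintro (a | e) (b | f) h <;> first | exact h.symm | exact h⟩
  loopless := ⟨by rintro (a | e) h <;> simp_all⟩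

/-! Send an independent set `U` of a graph `H` into one part of `K_{p-1}(m,…,m)` and the
new vertices of index `i` of the cliques of `H^{p+1}` into part `i`. The only clique vertices
that conflict are then those of index `0` on edges `uw` with `u ∈ U`; each of them goes to the
copy of `u` split off towards `w`, so `H^{p+1} ⊆ split(H, U) ∨ K_{p-1}(m,…,m)`. Splitting
the lollipop `C_{k,ℓ}` at a cycle vertex `v ≠ 0` gives exactly the member of `𝒴_{k+1,ℓ+1}`
whose branching vertex is at position `k - v`. -/

theorem IsCont.trans {α β γ : Type*} {A : SimpleGraph α} {B : SimpleGraph β}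
    {C : SimpleGraph γ} (hAB : IsCont A B) (hBC : IsCont B C) : IsCont A C := by
  obtain ⟨f, hf, hfA⟩ := hAB
  obtain ⟨g, hg, hgB⟩ := hBC
  exact ⟨g ∘ f, hg.comp hf, fun _ _ h => hgB (hfA h)⟩

theorem IsCont.gJoin_left {α β γ : Type*} {G : SimpleGraph α} {G' : SimpleGraph β}
    (h : IsCont G G') (K : SimpleGraph γ) : IsCont (gJoin G K) (gJoin G' K) := by
  obtain ⟨f, hf, hfG⟩ := h
  refine ⟨Sum.map f id, hf.sumMap Function.injective_id, ?_⟩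
  rintro (a | a) (b | b) hab
  exacts [hfG hab, trivial, trivial, hab]

@[simp] theorem gJoin_adj_inl_inl {α β : Type*} {G : SimpleGraph α} {K : SimpleGraph β}
    {a b : α} : (gJoin G K).Adj (.inl a) (.inl b) ↔ G.Adj a b :=
  Iff.rfl

@[simp] theorem splitGraph_adj_inl_inr {V : Type*} {H : SimpleGraph V} {U : Set V}
    {a : {v // v ∉ U}} {q : {q : V × V // q.1 ∈ U ∧ H.Adj q.1 q.2}} :
    (splitGraph H U).Adj (.inl a) (.inr q) ↔ q.1.2 = a :=
  Iff.rfl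

open Classical in
noncomputable def blowupToSplitJoin {V : Type*} (H : SimpleGraph V) (U : Set V) {p m : ℕ}
    (hp : 0 < p - 1) (ι : V ⊕ (H.edgeSet × Fin (p - 1)) ↪ Fin m) :
    V ⊕ (H.edgeSet × Fin (p - 1)) →
      ({v // v ∉ U} ⊕ {q : V × V // q.1 ∈ U ∧ H.Adj q.1 q.2}) ⊕ (Fin (p - 1) × Fin m)
  | .inl v => if hv : v ∈ U then .inr (⟨0, hp⟩, ι (.inl v)) else .inl (.inl ⟨v, hv⟩)
  | .inr (e, i) =>
    if h : i.val = 0 ∧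
        ∃ q : {q : V × V // q.1 ∈ U ∧ H.Adj q.1 q.2}, s(q.1.1, q.1.2) = e.1 then
      .inl (.inr h.2.choose)
    else .inr (i, ι (.inr (e, i)))

section blowup
variable {V : Type*} {H : SimpleGraph V} {U : Set V} {p m : ℕ} (hp : 0 < p - 1)
  (ι : V ⊕ (H.edgeSet × Fin (p - 1)) ↪ Fin m)

theorem exists_split_of_mem_edge {e : H.edgeSet} {a : V} (haU : a ∈ U) (hae : a ∈ e.1) :
    ∃ q : {q : V × V // q.1 ∈ U ∧ H.Adj q.1 q.2}, s(q.1.1, q.1.2) = e.1 := by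
  obtain ⟨e, he⟩ := e
  induction e using Sym2.ind with
  | _ x y =>
    rcases Sym2.mem_iff.mp hae with rfl | rfl
    · exact ⟨⟨(a, y), haU, he⟩, rfl⟩
    · exact ⟨⟨(a, x), haU, he.symm⟩, Sym2.eq_swap⟩

theorem blowupToSplitJoin_injective : Function.Injective (blowupToSplitJoin H U hp ι) := by
  rintro (v | ⟨e, i⟩) (w | ⟨f, i'⟩) h <;> simp only [blowupToSplitJoin] at h
  · split_ifs at h <;> simp_all
  · split_ifs at h <;> simp_all
  · split_ifs at h <;> simp_all
  · split_ifs at h with he hf hf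
    · have := congrArg (fun q : {q : V × V // q.1 ∈ U ∧ H.Adj q.1 q.2} => s(q.1.1, q.1.2))
        (Sum.inr.inj (Sum.inl.inj h))
      simp only [he.2.choose_spec, hf.2.choose_spec] at this
      simp [Subtype.ext this, Fin.ext (he.1.trans hf.1.symm)]
    all_goals simp_all

theorem blowupToSplitJoin_adj_inl_inr {a : V} {e : H.edgeSet}
    {i : Fin (p - 1)} (hae : a ∈ e.1) :
    (gJoin (splitGraph H U) (completeMultipartite (p - 1) m)).Adj
      (blowupToSplitJoin H U hp ι (.inl a)) (blowupToSplitJoin H U hp ι (.inr (e, i))) := by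
  simp only [blowupToSplitJoin]
  split_ifs with haU he he
  · trivial
  · have hi : i.val ≠ 0 := fun hi => he ⟨hi, exists_split_of_mem_edge haU hae⟩
    exact fun h => hi (congrArg Fin.val h).symm
  · rw [gJoin_adj_inl_inl, splitGraph_adj_inl_inr]
    rw [← he.2.choose_spec, Sym2.mem_iff] at hae
    rcases hae with rfl | rfl
    · exact absurd he.2.choose.2.1 haU
    · rfl
  · trivial

theorem blowupToSplitJoin_adj (hU : H.IsIndepSet U) {x y : V ⊕ (H.edgeSet × Fin (p - 1))}
    (hxy : (edgeBlowup H p).Adj x y) :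
    (gJoin (splitGraph H U) (completeMultipartite (p - 1) m)).Adj
      (blowupToSplitJoin H U hp ι x) (blowupToSplitJoin H U hp ι y) := by
  rcases x with a | ⟨e, i⟩ <;> rcases y with b | ⟨f, i'⟩
  · simp only [blowupToSplitJoin]
    split_ifs with haU hbU hbU
    · exact absurd hxy (hU haU hbU (H.ne_of_adj hxy))
    all_goals trivial
  · exact blowupToSplitJoin_adj_inl_inr hp ι hxy
  · exact (blowupToSplitJoin_adj_inl_inr hp ι hxy).symm
  · obtain ⟨rfl, hii'⟩ := hxy
    simp only [blowupToSplitJoin]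
    split_ifs with he hf hf
    · exact absurd (Fin.ext (he.1.trans hf.1.symm)) hii'
    all_goals trivial

end blowup

theorem edgeBlowup_isCont_gJoin_splitGraph {V : Type*} {H : SimpleGraph V} {U : Set V}
    {p m : ℕ} (hp : 0 < p - 1) (ι : V ⊕ (H.edgeSet × Fin (p - 1)) ↪ Fin m)
    (hU : H.IsIndepSet U) :
    IsCont (edgeBlowup H p) (gJoin (splitGraph H U) (completeMultipartite (p - 1) m)) :=
  ⟨_, blowupToSplitJoin_injective hp ι, fun _ _ => blowupToSplitJoin_adj hp ι hU⟩

theorem lollipop_adj_iff {k l : ℕ} {a b : Fin (k + l)} :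
    (lollipop k l).Adj a b ↔ a ≠ b ∧
      ((b.val = a.val + 1 ∧ b.val < k) ∨ (a.val = 0 ∧ b.val = k - 1) ∨
        (a.val = 0 ∧ b.val = k) ∨ (b.val = a.val + 1 ∧ k ≤ a.val) ∨
        (a.val = b.val + 1 ∧ a.val < k) ∨ (b.val = 0 ∧ a.val = k - 1) ∨
        (b.val = 0 ∧ a.val = k) ∨ (a.val = b.val + 1 ∧ k ≤ b.val)) := by
  simp only [lollipop, fromRel_adj, or_assoc]

theorem lollipop_adj_of_ne_zero_of_lt {k l : ℕ} {v w : Fin (k + l)} (hv0 : v.val ≠ 0)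
    (hvk : v.val < k) (h : (lollipop k l).Adj v w) :
    w.val + 1 = v.val ∨ (w.val = v.val + 1 ∧ w.val < k) ∨ (w.val = 0 ∧ v.val + 1 = k) := by
  rw [lollipop_adj_iff] at h
  omega

/-- The cycle is cut open at `v`: a vertex `u < k` goes to position `u - v mod k` of the path,
the copy of `v` split off towards `v - 1` to the end `k`, the other copy to the start `0`. -/
def splitLollipopToY (k l : ℕ) (v : Fin (k + l)) :
    {u // u ∉ ({v} : Set (Fin (k + l)))} ⊕
      {q : Fin (k + l) × Fin (k + l) //
        q.1 ∈ ({v} : Set (Fin (k + l))) ∧ (lollipop k l).Adj q.1 q.2} →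
    Fin (k + 1) ⊕ Fin l
  | .inl u =>
    if hu : u.1.val < k then
      .inl ⟨if u.1.val < v.val then u.1.val + k - v.val else u.1.val - v.val,
        by split_ifs <;> omega⟩
    else .inr ⟨u.1.val - k, by have := u.1.isLt; omega⟩
  | .inr q => .inl ⟨if q.1.2.val + 1 = v.val then k else 0, by split_ifs <;> omega⟩

section Ygraph
variable {k l j : ℕ}

@[simp] theorem Ygraph_adj_inl_inl {a b : Fin (k + 1)} :
    (Ygraph k l j).Adj (.inl a) (.inl b) ↔ b.val = a.val + 1 ∨ a.val = b.val + 1 := by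
  simp only [Ygraph, fromRel_adj, ne_eq, Sum.inl.injEq, Fin.ext_iff]
  omega

@[simp] theorem Ygraph_adj_inl_inr {a : Fin (k + 1)} {b : Fin l} :
    (Ygraph k l j).Adj (.inl a) (.inr b) ↔ a.val = j ∧ b.val = 0 := by
  simp [Ygraph, fromRel_adj]

@[simp] theorem Ygraph_adj_inr_inl {a : Fin l} {b : Fin (k + 1)} :
    (Ygraph k l j).Adj (.inr a) (.inl b) ↔ b.val = j ∧ a.val = 0 := by
  simp [Ygraph, fromRel_adj]

@[simp] theorem Ygraph_adj_inr_inr {a b : Fin l} :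
    (Ygraph k l j).Adj (.inr a) (.inr b) ↔ b.val = a.val + 1 ∨ a.val = b.val + 1 := by
  simp only [Ygraph, fromRel_adj, ne_eq, Sum.inr.injEq, Fin.ext_iff]
  omega

end Ygraph

theorem splitLollipopToY_injective {k l : ℕ} {v : Fin (k + l)} (hv0 : v.val ≠ 0)
    (hvk : v.val < k) : Function.Injective (splitLollipopToY k l v) := by
  rintro (⟨u, hu : u ≠ v⟩ | ⟨⟨v1, w⟩, hv1 : v1 = v, hw : (lollipop k l).Adj v1 w⟩)
    (⟨u', hu' : u' ≠ v⟩ | ⟨⟨v1', w'⟩, hv1' : v1' = v, hw' : (lollipop k l).Adj v1' w'⟩) h <;>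
  simp only [splitLollipopToY] at h
  · refine congrArg Sum.inl (Subtype.ext (Fin.ext ?_))
    change u.val = u'.val
    have := Fin.val_ne_of_ne hu
    have := Fin.val_ne_of_ne hu'
    repeat' split at h
    all_goals
      simp only [Sum.inl.injEq, Sum.inr.injEq, reduceCtorEq, Fin.mk.injEq] at h <;> omega
  · subst v1'
    have := Fin.val_ne_of_ne hu
    have := lollipop_adj_of_ne_zero_of_lt hv0 hvk hw'
    repeat' split at h
    all_goals simp only [Sum.inl.injEq, reduceCtorEq, Fin.mk.injEq] at h <;> omega
  · subst v1
    have := Fin.val_ne_of_ne hu'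
    have := lollipop_adj_of_ne_zero_of_lt hv0 hvk hw
    repeat' split at h
    all_goals simp only [Sum.inl.injEq, reduceCtorEq, Fin.mk.injEq] at h <;> omega
  · subst v1 v1'
    refine congrArg Sum.inr (Subtype.ext (Prod.ext rfl (Fin.ext ?_)))
    change w.val = w'.val
    have := lollipop_adj_of_ne_zero_of_lt hv0 hvk hw
    have := lollipop_adj_of_ne_zero_of_lt hv0 hvk hw'
    simp only [Sum.inl.injEq, Fin.mk.injEq] at h
    split_ifs at h <;> omega

theorem splitLollipopToY_adj_inl_inr {k l : ℕ} {v : Fin (k + l)} (hv0 : v.val ≠ 0)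
    (hvk : v.val < k) {u : {u // u ∉ ({v} : Set (Fin (k + l)))}}
    {q : {q : Fin (k + l) × Fin (k + l) //
      q.1 ∈ ({v} : Set (Fin (k + l))) ∧ (lollipop k l).Adj q.1 q.2}} (h : q.1.2 = u) :
    (Ygraph k l (k - v)).Adj (splitLollipopToY k l v (.inl u))
      (splitLollipopToY k l v (.inr q)) := by
  obtain ⟨u, hu⟩ := u
  obtain ⟨⟨v1, w⟩, hv1 : v1 = v, hw : (lollipop k l).Adj v1 w⟩ := q
  subst v1
  change w = u at h
  subst h
  have : w.val ≠ v.val := fun h => hu (Fin.ext h)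
  have := lollipop_adj_of_ne_zero_of_lt hv0 hvk hw
  simp only [splitLollipopToY]
  split <;> simp only [Ygraph_adj_inl_inl, Ygraph_adj_inr_inl] <;> split_ifs <;> omega

theorem splitLollipopToY_adj {k l : ℕ} {v : Fin (k + l)} (hv0 : v.val ≠ 0) (hvk : v.val < k)
    {x y} (h : (splitGraph (lollipop k l) {v}).Adj x y) :
    (Ygraph k l (k - v)).Adj (splitLollipopToY k l v x) (splitLollipopToY k l v y) := by
  rcases x with ⟨a, ha⟩ | q <;> rcases y with ⟨b, hb⟩ | q'
  · have : a.val ≠ v.val := fun h => ha (Fin.ext h)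
    have : b.val ≠ v.val := fun h => hb (Fin.ext h)
    change (lollipop k l).Adj a b at h
    rw [lollipop_adj_iff, ne_eq, Fin.ext_iff] at h
    simp only [splitLollipopToY]
    repeat' split
    all_goals
      simp only [Ygraph_adj_inl_inl, Ygraph_adj_inl_inr, Ygraph_adj_inr_inl, Ygraph_adj_inr_inr]
      omega
  · exact splitLollipopToY_adj_inl_inr hv0 hvk h
  · exact (splitLollipopToY_adj_inl_inr hv0 hvk h).symm
  · exact h.elim

theorem lollipop_splitGraph_isCont_Ygraph {k l : ℕ} {v : Fin (k + l)} (hv0 : v.val ≠ 0)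
    (hvk : v.val < k) : IsCont (splitGraph (lollipop k l) {v}) (Ygraph k l (k - v)) :=
  ⟨_, splitLollipopToY_injective hv0 hvk, fun _ _ => splitLollipopToY_adj hv0 hvk⟩

theorem stmt9_general (k l p m : ℕ) (hp : 2 ≤ p)
    (hm : m = Nat.card (Fin (k + l) ⊕ ((lollipop k l).edgeSet × Fin (p - 1)))) :
    ∀ j : ℕ, 0 < j → j < k →
      IsCont (edgeBlowup (lollipop k l) p)
        (gJoin (Ygraph k l j) (completeMultipartite (p - 1) m)) := by
  intro j hj0 hjk
  let ι := (Finite.equivFinOfCardEq hm.symm).toEmbedding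
  let v : Fin (k + l) := ⟨k - j, by omega⟩
  have hY : IsCont (splitGraph (lollipop k l) {v}) (Ygraph k l j) := by
    have h := lollipop_splitGraph_isCont_Ygraph (v := v) (by simp only [v]; omega)
      (by simp only [v]; omega)
    rwa [show k - (k - j) = j by omega] at h
  exact (edgeBlowup_isCont_gJoin_splitGraph (by omega) ι (Set.pairwise_singleton _ _)).trans
    (hY.gJoin_left _)

/-- For any graph `Y ∈ 𝒴_{k+1,ℓ+1}` (a path `P_{k+1}` with a path
`P_{ℓ+1}` attached at an internal vertex `j`), every `p ≥ 2` and
`m = |V(C_{k,ℓ}^{p+1})|`, the edge blow-up `C_{k,ℓ}^{p+1}` is a subgraph of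
`Y ∨ K_{p-1}(m,…,m)`. -/
theorem stmt9 (k l p m : ℕ) (hk : 3 ≤ k) (hl : 1 ≤ l) (hp : 2 ≤ p)
    (hm : m = Nat.card (Fin (k + l) ⊕ ((lollipop k l).edgeSet × Fin (p - 1)))) :
    ∀ j : ℕ, 0 < j → j < k →
      IsCont (edgeBlowup (lollipop k l) p)
        (gJoin (Ygraph k l j) (completeMultipartite (p - 1) m)) :=
  stmt9_general k l p m hp hm
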